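/- arXiv:2602.22797 — 2 statements merged into one kernel-verified Lean document; each statement's English description precedes it below -/
import Mathlib

section
/- For every real τ, every real δ > 0, and every integer p ≥ 1: δ^{p−2} H_p(τ,δ) = S_{p−1} T_p − S_p T_{p−1}. -/
/-- λ₁ = (τ + √(τ²−4δ))/2, using the complex principal square root. -/
noncomputable def lam1 (τ δ : ℝ) : ℂ :=
  ((τ : ℂ) + ((τ : ℂ) ^ 2 - 4 * (δ : ℂ)) ^ ((1 : ℂ) / 2)) / 2

/-- λ₂ = (τ − √(τ²−4δ))/2, using the complex principal square root. -/
noncomputable def lam2 (τ δ : ℝ) : ℂ :=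
  ((τ : ℂ) - ((τ : ℂ) ^ 2 - 4 * (δ : ℂ)) ^ ((1 : ℂ) / 2)) / 2

/-- S_j = Σ_{k=1}^{j} λ₁^{j−k} λ₂^{k−1} (index shifted: k = k'+1). -/
noncomputable def Sseq (τ δ : ℝ) (j : ℕ) : ℂ :=
  ∑ k ∈ Finset.range j, lam1 τ δ ^ (j - 1 - k) * lam2 τ δ ^ k

/-- T_j = Σ_{i=1}^{j−1} S_i. -/
noncomputable def Tseq (τ δ : ℝ) (j : ℕ) : ℂ :=
  ∑ i ∈ Finset.Icc 1 (j - 1), Sseq τ δ i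

/-- H_p(τ,δ) = Σ_{j=1}^{p−1} Σ_{k=1}^{j} λ₁^{k−j} λ₂^{1−k}
(indices shifted: j = j'+1, k = k'+1). -/
noncomputable def Hp (p : ℕ) (τ δ : ℝ) : ℂ :=
  ∑ j ∈ Finset.range (p - 1), ∑ k ∈ Finset.range (j + 1),
    lam1 τ δ ^ ((k : ℤ) - (j : ℤ)) * lam2 τ δ ^ (-(k : ℤ))

/-!
With a = λ₁, b = λ₂ we have ab = δ, and S_j is the Lucas sequence U_j = (aʲ − bʲ)/(a − b) of
the pair (a, b). The inner sum of H_p is S_{j+1}(a⁻¹, b⁻¹) = δ⁻ʲ S_{j+1}, so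
δ^{p−2} H_p = Σ_{i<p−1} δⁱ S_{p−1−i}. On the other side, S_{p−1} T_p − S_p T_{p−1} is the sum over
i < p − 1 of S_{p−1} S_{i+1} − S_p S_i, which d'Ocagne's identity
S_{d+e} S_{d+1} − S_{d+e+1} S_d = (ab)ᵈ S_e turns into the same sum term by term.
-/

section CommRing

variable {R : Type*} [CommRing R] (a b : R)

def lucasU (n : ℕ) : R :=
  ∑ k ∈ Finset.range n, a ^ (n - 1 - k) * b ^ k

@[simp]
lemma lucasU_zero : lucasU a b 0 = 0 := by simp [lucasU]

@[simp]
lemma lucasU_one : lucasU a b 1 = 1 := by simp [lucasU]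

lemma lucasU_succ (n : ℕ) : lucasU a b (n + 1) = a * lucasU a b n + b ^ n := by
  rw [lucasU, Finset.sum_range_succ, lucasU, Finset.mul_sum, Nat.add_sub_cancel, Nat.sub_self,
    pow_zero, one_mul]
  congr 1
  refine Finset.sum_congr rfl fun k hk => ?_
  rw [← mul_assoc, ← pow_succ', show n - 1 - k + 1 = n - k by grind]

lemma lucasU_add_two (n : ℕ) :
    lucasU a b (n + 2) = (a + b) * lucasU a b (n + 1) - a * b * lucasU a b n := by
  linear_combination lucasU_succ a b (n + 1) - b * lucasU_succ a b n

lemma lucasU_dOcagne (d e : ℕ) :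
    lucasU a b (d + e) * lucasU a b (d + 1) - lucasU a b (d + e + 1) * lucasU a b d
      = (a * b) ^ d * lucasU a b e := by
  induction d with
  | zero => simp
  | succ d ih =>
    rw [show d + 1 + e = d + e + 1 by ring, lucasU_add_two, lucasU_add_two, pow_succ']
    linear_combination a * b * ih

lemma lucasU_mul_sum_sub_mul_sum (q : ℕ) :
    lucasU a b q * ∑ i ∈ Finset.range q, lucasU a b (i + 1)
        - lucasU a b (q + 1) * ∑ i ∈ Finset.range q, lucasU a b i
      = ∑ i ∈ Finset.range q, (a * b) ^ i * lucasU a b (q - i) := by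
  rw [Finset.mul_sum, Finset.mul_sum, ← Finset.sum_sub_distrib]
  refine Finset.sum_congr rfl fun i hi => ?_
  obtain ⟨e, rfl⟩ := Nat.exists_eq_add_of_le (Finset.mem_range.mp hi).le
  rw [Nat.add_sub_cancel_left, ← lucasU_dOcagne]

end CommRing

section Field

variable {K : Type*} [Field K] {a b : K}

lemma pow_mul_lucasU_inv_inv (ha : a ≠ 0) (hb : b ≠ 0) (n : ℕ) :
    (a * b) ^ n * lucasU a⁻¹ b⁻¹ (n + 1) = lucasU a b (n + 1) := by
  rw [lucasU, lucasU, ← Finset.sum_range_reflect, Finset.mul_sum]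
  refine Finset.sum_congr rfl fun k hk => ?_
  obtain ⟨m, rfl⟩ := Nat.exists_eq_add_of_le (Nat.lt_succ_iff.mp (Finset.mem_range.mp hk))
  rw [show k + m + 1 - 1 - (k + m + 1 - 1 - k) = k by omega, show k + m + 1 - 1 - k = m by omega]
  rw [inv_pow, inv_pow, mul_pow, pow_add, pow_add]
  field_simp

lemma pow_mul_sum_lucasU_inv_inv (ha : a ≠ 0) (hb : b ≠ 0) (q : ℕ) :
    (a * b) ^ q * ∑ j ∈ Finset.range (q + 1), lucasU a⁻¹ b⁻¹ (j + 1)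
      = ∑ i ∈ Finset.range (q + 1), (a * b) ^ i * lucasU a b (q + 1 - i) := by
  rw [Finset.mul_sum, ← Finset.sum_range_reflect]
  refine Finset.sum_congr rfl fun i hi => ?_
  obtain ⟨m, rfl⟩ := Nat.exists_eq_add_of_le (Nat.lt_succ_iff.mp (Finset.mem_range.mp hi))
  rw [show i + m + 1 - 1 - i = m by omega, show i + m + 1 - i = m + 1 by omega, pow_add,
    mul_assoc, pow_mul_lucasU_inv_inv ha hb]

end Field

lemma lam1_mul_lam2 (τ δ : ℝ) : lam1 τ δ * lam2 τ δ = δ := by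
  have hsq : (((τ : ℂ) ^ 2 - 4 * δ) ^ ((1 : ℂ) / 2)) ^ 2 = (τ : ℂ) ^ 2 - 4 * δ := by
    rw [one_div]
    exact_mod_cast Complex.cpow_nat_inv_pow _ two_ne_zero
  rw [lam1, lam2]
  linear_combination (-1 / 4 : ℂ) * hsq

lemma Sseq_eq_lucasU (τ δ : ℝ) (n : ℕ) : Sseq τ δ n = lucasU (lam1 τ δ) (lam2 τ δ) n := rfl

lemma Tseq_succ_eq_sum (τ δ : ℝ) (n : ℕ) :
    Tseq τ δ (n + 1) = ∑ i ∈ Finset.range n, Sseq τ δ (i + 1) := by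
  rw [Tseq, Nat.add_sub_cancel, ← Finset.Ico_add_one_right_eq_Icc, Finset.sum_Ico_eq_sum_range]
  simp only [Nat.add_sub_cancel, add_comm 1]

lemma Hp_eq_sum_lucasU_inv_inv (p : ℕ) (τ δ : ℝ) :
    Hp p τ δ = ∑ j ∈ Finset.range (p - 1), lucasU (lam1 τ δ)⁻¹ (lam2 τ δ)⁻¹ (j + 1) := by
  refine Finset.sum_congr rfl fun j _ => Finset.sum_congr rfl fun k hk => ?_
  obtain ⟨m, rfl⟩ := Nat.exists_eq_add_of_le (Nat.lt_succ_iff.mp (Finset.mem_range.mp hk))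
  rw [show ((k : ℤ) - ((k + m : ℕ) : ℤ)) = -(m : ℤ) by push_cast; ring, zpow_neg, zpow_neg,
    zpow_natCast, zpow_natCast, inv_pow, inv_pow, show k + m + 1 - 1 - k = m by omega]

theorem deltaPow_mul_Hp_eq_general (τ δ : ℝ) (hδ : 0 < δ) (p : ℕ) :
    (δ : ℂ) ^ ((p : ℤ) - 2) * Hp p τ δ
      = Sseq τ δ (p - 1) * Tseq τ δ p - Sseq τ δ p * Tseq τ δ (p - 1) := by
  rcases p with _ | _ | q
  · simp [Hp, Sseq, Tseq]
  · simp [Hp, Sseq, Tseq]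
  have hab := lam1_mul_lam2 τ δ
  obtain ⟨ha, hb⟩ : lam1 τ δ ≠ 0 ∧ lam2 τ δ ≠ 0 := by
    rw [← mul_ne_zero_iff, hab]
    exact_mod_cast hδ.ne'
  have hT : Tseq τ δ (q + 1) = ∑ i ∈ Finset.range (q + 1), Sseq τ δ i := by
    rw [Tseq_succ_eq_sum, Finset.sum_range_succ' _ q, Sseq_eq_lucasU, lucasU_zero, add_zero]
  rw [Hp_eq_sum_lucasU_inv_inv]
  simp only [Nat.add_sub_cancel]
  rw [hT, Tseq_succ_eq_sum, show ((q + 2 : ℕ) : ℤ) - 2 = q by push_cast; ring, zpow_natCast,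
    ← hab, pow_mul_sum_lucasU_inv_inv ha hb]
  exact (lucasU_mul_sum_sub_mul_sum _ _ (q + 1)).symm

/-- For every real τ, every δ > 0, and every integer p ≥ 1:
δ^{p−2} H_p(τ,δ) = S_{p−1} T_p − S_p T_{p−1}. -/
theorem deltaPow_mul_Hp_eq (τ δ : ℝ) (hδ : 0 < δ) (p : ℕ) (hp : 1 ≤ p) :
    (δ : ℂ) ^ ((p : ℤ) - 2) * Hp p τ δ
      = Sseq τ δ (p - 1) * Tseq τ δ p - Sseq τ δ p * Tseq τ δ (p - 1) :=
  deltaPow_mul_Hp_eq_general τ δ hδ p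
end

section
/- Fix an integer p ≥ 1, a vector b = (b₁, b₂) ∈ ℝ², and suppose a₁₂ ≠ 0 and β = (1−a₂₂)b₁ + a₁₂b₂ ≠ 0. Let b_{1p} be the first component of Σ_{j=0}^{p−1} A^j b. Define the sequence (u_j, w_j) in ℝ² by u₀ = 0, w₀ = −b_{1p}/(a₁₂ β), and (u_j, w_j)ᵀ = A (u_{j−1}, w_{j−1})ᵀ + (S_p/β) b for j ≥ 1. Then u_j = S_p T_j − S_j T_p for every 0 ≤ j ≤ p; in particular u_p = 0. -/
/-!
For a 2×2 matrix, `A + adj A = τ • 1` and `A * adj A = δ • 1`, so `A ^ n = S (n+1) • 1 - S n • adj A`;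
summing the first coordinate gives `b_{1p} = S_p b₁ + β T_p`, whence `u₁ = -T_p`. By the same
Cayley–Hamilton relation, the first coordinate of the affine recursion satisfies
`u_{j+2} = τ u_{j+1} - δ u_j + S_p`. Since `T_{j+2} = τ T_{j+1} - δ T_j + 1`, the sequence
`S_p T_j - S_j T_p` satisfies the same recursion with the same two initial values, so it equals `u`.
-/

open Finset Matrix

theorem Finset.sum_Icc_one_sub_one_eq_sum_range {M : Type*} [AddCommMonoid M] {f : ℕ → M}
    (hf : f 0 = 0) (n : ℕ) : ∑ i ∈ Icc 1 (n - 1), f i = ∑ i ∈ range n, f i := by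
  cases n with
  | zero => simp
  | succ n =>
    rw [sum_range_succ', hf, add_zero, Nat.add_sub_cancel, ← Ico_add_one_right_eq_Icc,
      sum_Ico_eq_sum_range, Nat.add_sub_cancel]
    simp only [add_comm]

theorem eq_of_two_step_recurrence {α : Type*} {x y : ℕ → α} (F : α → α → α)
    (hx : ∀ n, x (n + 2) = F (x n) (x (n + 1))) (hy : ∀ n, y (n + 2) = F (y n) (y (n + 1)))
    (h0 : x 0 = y 0) (h1 : x 1 = y 1) : x = y := by
  have h : ∀ n, x n = y n ∧ x (n + 1) = y (n + 1) := by
    intro n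
    induction n with
    | zero => exact ⟨h0, h1⟩
    | succ n ih => exact ⟨ih.2, by rw [hx, hy, ih.1, ih.2]⟩
  exact funext fun n => (h n).1

section LinearRecurrence

variable {R : Type*} [CommRing R] {S : ℕ → R}

theorem sum_range_add_two_of_linear_recurrence {τ δ : R} (hS0 : S 0 = 0) (hS1 : S 1 = 1)
    (hS : ∀ n, S (n + 2) = τ * S (n + 1) - δ * S n) (n : ℕ) :
    ∑ i ∈ range (n + 2), S i = τ * ∑ i ∈ range (n + 1), S i - δ * ∑ i ∈ range n, S i + 1 := by
  induction n with
  | zero => simp [sum_range_succ, hS0, hS1]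
  | succ n ih =>
    simp only [sum_range_succ] at ih ⊢
    linear_combination ih + hS n

theorem Matrix.adjugate_fin_two_eq_trace_smul_one_sub (A : Matrix (Fin 2) (Fin 2) R) :
    A.adjugate = A.trace • 1 - A := by
  ext i j
  fin_cases i <;> fin_cases j <;> simp [adjugate_fin_two, trace_fin_two]

theorem Matrix.pow_fin_two_eq_of_linear_recurrence {A : Matrix (Fin 2) (Fin 2) R}
    (hS0 : S 0 = 0) (hS1 : S 1 = 1) (hS : ∀ n, S (n + 2) = A.trace * S (n + 1) - A.det * S n)
    (n : ℕ) : A ^ n = S (n + 1) • 1 - S n • A.adjugate := by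
  induction n with
  | zero => simp [hS0, hS1]
  | succ n ih =>
    rw [pow_succ', ih, mul_sub, mul_smul_comm, mul_smul_comm, mul_one, mul_adjugate, hS,
      adjugate_fin_two_eq_trace_smul_one_sub]
    module

theorem Matrix.sum_pow_mulVec_fin_two_apply_zero {A : Matrix (Fin 2) (Fin 2) R} (b : Fin 2 → R)
    (hS0 : S 0 = 0) (hS1 : S 1 = 1) (hS : ∀ n, S (n + 2) = A.trace * S (n + 1) - A.det * S n)
    (n : ℕ) :
    (∑ j ∈ range n, (A ^ j) *ᵥ b) 0 =
      S n * b 0 + ((1 - A 1 1) * b 0 + A 0 1 * b 1) * ∑ j ∈ range n, S j := by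
  induction n with
  | zero => simp [hS0]
  | succ n ih =>
    rw [sum_range_succ, Pi.add_apply, ih, pow_fin_two_eq_of_linear_recurrence hS0 hS1 hS,
      sum_range_succ, sub_mulVec, smul_mulVec, smul_mulVec, one_mulVec, mulVec_fin_two,
      adjugate_fin_two]
    simp only [of_apply, cons_val', cons_val_zero, cons_val_one, cons_val_fin_one, Pi.sub_apply,
      Pi.smul_apply, smul_eq_mul]
    ring

theorem two_step_recurrence_of_affine_fin_two (A : Matrix (Fin 2) (Fin 2) R) (c : R)
    (b : Fin 2 → R) {u w : ℕ → R} (hu : ∀ k, u (k + 1) = A 0 0 * u k + A 0 1 * w k + c * b 0)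
    (hw : ∀ k, w (k + 1) = A 1 0 * u k + A 1 1 * w k + c * b 1) (k : ℕ) :
    u (k + 2) = A.trace * u (k + 1) - A.det * u k + c * ((1 - A 1 1) * b 0 + A 0 1 * b 1) := by
  rw [trace_fin_two, det_fin_two]
  linear_combination hu (k + 1) + A 0 1 * hw k - A 1 1 * hu k

end LinearRecurrence

theorem u_seq_eq_general (A : Matrix (Fin 2) (Fin 2) ℝ) (S T : ℕ → ℝ)
    (hS0 : S 0 = 0) (hS1 : S 1 = 1)
    (hSrec : ∀ j : ℕ, 1 ≤ j →
      S (j + 1) = (A 0 0 + A 1 1) * S j - (A 0 0 * A 1 1 - A 0 1 * A 1 0) * S (j - 1))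
    (hT : ∀ j : ℕ, T j = ∑ i ∈ Finset.Icc 1 (j - 1), S i)
    (p : ℕ) (b : Fin 2 → ℝ)
    (ha12 : A 0 1 ≠ 0)
    (hβ : (1 - A 1 1) * b 0 + A 0 1 * b 1 ≠ 0)
    (u w : ℕ → ℝ)
    (hu0 : u 0 = 0)
    (hw0 : w 0 = -((∑ j ∈ Finset.range p, (A ^ j).mulVec b) 0) /
                  (A 0 1 * ((1 - A 1 1) * b 0 + A 0 1 * b 1)))
    (hrec : ∀ j : ℕ, 1 ≤ j →
      u j = A 0 0 * u (j - 1) + A 0 1 * w (j - 1)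
              + S p / ((1 - A 1 1) * b 0 + A 0 1 * b 1) * b 0 ∧
      w j = A 1 0 * u (j - 1) + A 1 1 * w (j - 1)
              + S p / ((1 - A 1 1) * b 0 + A 0 1 * b 1) * b 1) :
    (∀ j : ℕ, j ≤ p → u j = S p * T j - S j * T p) ∧ u p = 0 := by
  set β := (1 - A 1 1) * b 0 + A 0 1 * b 1
  have hS : ∀ n, S (n + 2) = A.trace * S (n + 1) - A.det * S n := fun n => by
    rw [trace_fin_two, det_fin_two]
    exact hSrec (n + 1) n.succ_pos
  have hT_range : ∀ n, T n = ∑ i ∈ range n, S i := fun n => by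
    rw [hT, sum_Icc_one_sub_one_eq_sum_range hS0]
  have hu : ∀ k, u (k + 1) = A 0 0 * u k + A 0 1 * w k + S p / β * b 0 := fun k =>
    (hrec (k + 1) k.succ_pos).1
  have hw : ∀ k, w (k + 1) = A 1 0 * u k + A 1 1 * w k + S p / β * b 1 := fun k =>
    (hrec (k + 1) k.succ_pos).2
  have hu1 : u 1 = -T p := by
    rw [hu 0, hu0, hw0, sum_pow_mulVec_fin_two_apply_zero b hS0 hS1 hS, ← hT_range]
    field_simp
    ring
  have hu_eq : u = fun k => S p * T k - S k * T p := by
    refine eq_of_two_step_recurrence (fun x y => A.trace * y - A.det * x + S p)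
      (fun k => ?_) (fun k => ?_) ?_ ?_
    · rw [two_step_recurrence_of_affine_fin_two A _ b hu hw k, div_mul_cancel₀ _ hβ]
    · simp only [hT_range]
      linear_combination S p * sum_range_add_two_of_linear_recurrence hS0 hS1 hS k
        - (∑ i ∈ range p, S i) * hS k
    · simp [hu0, hT_range, hS0]
    · simp [hu1, hT_range, hS0, hS1]
  exact ⟨fun j _ => congrFun hu_eq j, by rw [hu_eq]; ring⟩

/-- Fix p ≥ 1, b ∈ ℝ², with a₁₂ ≠ 0 and β = (1−a₂₂)b₁ + a₁₂b₂ ≠ 0.  Let b_{1p} be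
the first component of Σ_{j=0}^{p−1} A^j b.  Define (u_j, w_j) by u₀ = 0,
w₀ = −b_{1p}/(a₁₂ β), and (u_j, w_j)ᵀ = A (u_{j−1}, w_{j−1})ᵀ + (S_p/β) b for j ≥ 1.
Then u_j = S_p T_j − S_j T_p for all 0 ≤ j ≤ p; in particular u_p = 0. -/
theorem u_seq_eq (A : Matrix (Fin 2) (Fin 2) ℝ) (S T : ℕ → ℝ)
    (hS0 : S 0 = 0) (hS1 : S 1 = 1)
    (hSrec : ∀ j : ℕ, 1 ≤ j →
      S (j + 1) = (A 0 0 + A 1 1) * S j - (A 0 0 * A 1 1 - A 0 1 * A 1 0) * S (j - 1))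
    (hT : ∀ j : ℕ, T j = ∑ i ∈ Finset.Icc 1 (j - 1), S i)
    (p : ℕ) (hp : 1 ≤ p) (b : Fin 2 → ℝ)
    (ha12 : A 0 1 ≠ 0)
    (hβ : (1 - A 1 1) * b 0 + A 0 1 * b 1 ≠ 0)
    (u w : ℕ → ℝ)
    (hu0 : u 0 = 0)
    (hw0 : w 0 = -((∑ j ∈ Finset.range p, (A ^ j).mulVec b) 0) /
                  (A 0 1 * ((1 - A 1 1) * b 0 + A 0 1 * b 1)))
    (hrec : ∀ j : ℕ, 1 ≤ j →
      u j = A 0 0 * u (j - 1) + A 0 1 * w (j - 1)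
              + S p / ((1 - A 1 1) * b 0 + A 0 1 * b 1) * b 0 ∧
      w j = A 1 0 * u (j - 1) + A 1 1 * w (j - 1)
              + S p / ((1 - A 1 1) * b 0 + A 0 1 * b 1) * b 1) :
    (∀ j : ℕ, j ≤ p → u j = S p * T j - S j * T p) ∧ u p = 0 :=
  u_seq_eq_general A S T hS0 hS1 hSrec hT p b ha12 hβ u w hu0 hw0 hrec
end
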